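/- Let (X, ρ) be a metric space and γ : [a,b] → X a continuous mapping. Then there exists a compact subset A ⊂ [a,b] containing the points a and b such that the restriction of γ to A is a piecewise injective curve; that is: (i) if γ(c) = γ(d) for c, d ∈ A with c < d, then the open interval (c, d) does not intersect A, and (ii) for every segment [c,d] ⊂ ℝ the set γ([c,d] ∩ A) is connected. -/
import Mathlib

open Set

/-- The gap condition: the endpoints of every "gap" of `A` are mapped by `γ`
to the same point. -/
def GapCondPI {X : Type*} [MetricSpace X] (γ : ℝ → X) (A : Set ℝ) : Prop :=
  ∀ u ∈ A, ∀ v ∈ A, u < v → Set.Ioo u v ∩ A = ∅ → γ u = γ v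

/-- If a compact set satisfies the gap condition, images of its interval sections
(with endpoints in the set) are preconnected. -/
lemma gapCond_image_preconnected {X : Type*} [MetricSpace X] {γ : ℝ → X} {a b : ℝ}
    (hγ : ContinuousOn γ (Set.Icc a b)) {A : Set ℝ} (hAsub : A ⊆ Set.Icc a b)
    (hA : IsCompact A) (hgap : GapCondPI γ A) {c' d' : ℝ}
    (hc' : c' ∈ A) (hd' : d' ∈ A) (hcd : c' ≤ d') :
    IsPreconnected (γ '' (A ∩ Set.Icc c' d')) := by
  -- the "last point of A before t" function
  set u : ℝ → ℝ := fun t => sSup (A ∩ Icc c' t) with hu_def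
  set g : ℝ → X := fun t => γ (u t) with hg_def
  have hUcomp : ∀ t : ℝ, IsCompact (A ∩ Icc c' t) := fun t => hA.inter_right isClosed_Icc
  have hUne : ∀ t : ℝ, c' ≤ t → (A ∩ Icc c' t).Nonempty := fun t ht => ⟨c', hc', le_refl _, ht⟩
  have hu_mem : ∀ t : ℝ, c' ≤ t → u t ∈ A ∩ Icc c' t := fun t ht =>
    (hUcomp t).sSup_mem (hUne t ht)
  have hu_ub : ∀ t : ℝ, ∀ s ∈ A, c' ≤ s → s ≤ t → s ≤ u t := fun t s hs h1 h2 =>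
    le_csSup (hUcomp t).bddAbove ⟨hs, h1, h2⟩
  -- key : if there is no point of A in (u t₀, t] then u t = u t₀
  have key : ∀ t₀ t : ℝ, c' ≤ t₀ → c' ≤ t → A ∩ Ioc (u t₀) t = ∅ → u t₀ ≤ t → u t = u t₀ := by
    intro t₀ t ht₀ ht hemp hle
    have h1 := hu_mem t ht
    have h2 := hu_mem t₀ ht₀
    have h3 : u t ≤ u t₀ := by
      by_contra h
      push_neg at h
      have : u t ∈ A ∩ Ioc (u t₀) t := ⟨h1.1, h, h1.2.2⟩
      rw [hemp] at this; exact this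
    exact le_antisymm h3 (hu_ub t (u t₀) h2.1 h2.2.1 hle)
  have hgcont : ContinuousOn g (Icc c' d') := by
    intro t₀ ht₀
    rw [Metric.continuousWithinAt_iff]
    intro ε hε
    have hu₀ := hu_mem t₀ ht₀.1
    have hu₀ab : u t₀ ∈ Icc a b := hAsub hu₀.1
    obtain ⟨δ₁, hδ₁pos, hδ₁⟩ := Metric.continuousWithinAt_iff.1 (hγ (u t₀) hu₀ab) ε hε
    -- no points of A in (u t₀, t₀]
    have hWempty : A ∩ Ioc (u t₀) t₀ = ∅ := by
      ext x; simp only [mem_inter_iff, mem_Ioc, mem_empty_iff_false, iff_false, not_and, and_imp]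
      intro hxA h1 h2
      have : x ≤ u t₀ := hu_ub t₀ x hxA (le_trans hu₀.2.1 h1.le) h2
      exact absurd this (not_le.2 h1)
    -- left side
    have hL : ∃ δL > 0, ∀ t ∈ Icc c' d', t < t₀ → t₀ - t < δL → dist (g t) (g t₀) < ε := by
      rcases lt_or_eq_of_le hu₀.2.2 with h1 | h1
      · -- u t₀ < t₀ : g is constant on (u t₀, t₀]
        refine ⟨t₀ - u t₀, by linarith, fun t ht htlt hclose => ?_⟩
        have hle : u t₀ ≤ t := by linarith
        have : u t = u t₀ := by
          refine key t₀ t ht₀.1 ht.1 ?_ hle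
          have : A ∩ Ioc (u t₀) t ⊆ A ∩ Ioc (u t₀) t₀ :=
            inter_subset_inter_right _ (Ioc_subset_Ioc_right htlt.le)
          rw [hWempty] at this; exact eq_empty_of_subset_empty this
        simp only [hg_def, this, dist_self]; exact hε
      · -- u t₀ = t₀, i.e. t₀ ∈ A
        have ht₀A : t₀ ∈ A := h1 ▸ hu₀.1
        set W := A ∩ Ico c' t₀ with hW_def
        rcases W.eq_empty_or_nonempty with hW | hW
        · -- then t₀ = c' and there is nothing to the left
          refine ⟨1, one_pos, fun t ht htlt _ =>
            absurd (show c' ∈ W from ⟨hc', le_refl _, lt_of_le_of_lt ht.1 htlt⟩)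
              (by rw [hW]; exact notMem_empty c')⟩
        · have hWbdd : BddAbove W := ⟨t₀, fun x hx => hx.2.2.le⟩
          set w := sSup W with hw_def
          have hwA : w ∈ A ∩ Icc c' t₀ := by
            have hsub : closure W ⊆ A ∩ Icc c' t₀ := by
              apply closure_minimal _ (hA.isClosed.inter isClosed_Icc)
              exact inter_subset_inter_right _ Ico_subset_Icc_self
            exact hsub (csSup_mem_closure hW hWbdd)
          rcases lt_or_eq_of_le hwA.2.2 with hlt | heq
          · -- gap (w, t₀): γ w = γ t₀, and g is constant = γ t₀ on (w, t₀)
            have hgapwt : Ioo w t₀ ∩ A = ∅ := by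
              ext x
              simp only [mem_inter_iff, mem_Ioo, mem_empty_iff_false, iff_false, not_and, and_imp]
              intro h2 h3 hxA
              have : x ∈ W := ⟨hxA, le_trans hwA.2.1 h2.le, h3⟩
              exact absurd (le_csSup hWbdd this) (not_le.2 h2)
            have hγwt : γ w = γ t₀ := hgap w hwA.1 t₀ ht₀A hlt hgapwt
            refine ⟨t₀ - w, by linarith, fun t ht htlt hclose => ?_⟩
            have hwt : w ≤ t := by linarith
            have hut : u t = w := by
              have h3 : u t ≤ w := by
                rcases hu_mem t ht.1 with ⟨hA1, hA2, hA3⟩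
                by_contra h
                push_neg at h
                have : u t ∈ Ioo w t₀ ∩ A := ⟨⟨h, lt_of_le_of_lt hA3 htlt⟩, hA1⟩
                rw [hgapwt] at this; exact this
              exact le_antisymm h3 (hu_ub t w hwA.1 hwA.2.1 hwt)
            show dist (γ (u t)) (γ (u t₀)) < ε
            rw [hut, hγwt, h1, dist_self]; exact hε
          · -- A accumulates at t₀ from the left
            obtain ⟨s, hsW, hs⟩ := exists_lt_of_lt_csSup hW
              (show t₀ - δ₁ < w by rw [heq]; linarith)
            refine ⟨t₀ - s, by have := hsW.2.2; linarith, fun t ht htlt hclose => ?_⟩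
            have h2 : s ≤ u t := hu_ub t s hsW.1 hsW.2.1 (by linarith)
            have h3 : u t ≤ t := (hu_mem t ht.1).2.2
            have : dist (u t) (u t₀) < δ₁ := by
              rw [Real.dist_eq, h1, abs_sub_lt_iff]
              constructor <;> linarith
            exact hδ₁ (hAsub (hu_mem t ht.1).1) this
    -- right side
    have hR : ∃ δR > 0, ∀ t ∈ Icc c' d', t₀ < t → t - t₀ < δR → dist (g t) (g t₀) < ε := by
      set V := A ∩ Ioc t₀ d' with hV_def
      rcases V.eq_empty_or_nonempty with hV | hV
      · refine ⟨1, one_pos, fun t ht htgt _ => ?_⟩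
        have : u t = u t₀ := by
          refine key t₀ t ht₀.1 ht.1 ?_ (le_trans hu₀.2.2 htgt.le)
          ext x
          simp only [mem_inter_iff, mem_Ioc, mem_empty_iff_false, iff_false, not_and, and_imp]
          intro hxA h2 h3
          rcases le_or_gt x t₀ with h4 | h4
          · have : x ∈ A ∩ Ioc (u t₀) t₀ := ⟨hxA, h2, h4⟩
            rw [hWempty] at this; exact this
          · have : x ∈ V := ⟨hxA, h4, le_trans h3 ht.2⟩
            rw [hV] at this; exact this
        simp only [hg_def, this, dist_self]; exact hε
      · have hVbdd : BddBelow V := ⟨t₀, fun x hx => hx.2.1.le⟩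
        set v := sInf V with hv_def
        have hvA : v ∈ A ∩ Icc t₀ d' := by
          have hsub : closure V ⊆ A ∩ Icc t₀ d' := by
            apply closure_minimal _ (hA.isClosed.inter isClosed_Icc)
            exact inter_subset_inter_right _ Ioc_subset_Icc_self
          exact hsub (csInf_mem_closure hV hVbdd)
        rcases lt_or_eq_of_le hvA.2.1 with hlt | heq
        · -- g is constant on [t₀, v)
          refine ⟨v - t₀, by linarith, fun t ht htgt hclose => ?_⟩
          have : u t = u t₀ := by
            refine key t₀ t ht₀.1 ht.1 ?_ (le_trans hu₀.2.2 htgt.le)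
            ext x
            simp only [mem_inter_iff, mem_Ioc, mem_empty_iff_false, iff_false, not_and, and_imp]
            intro hxA h2 h3
            rcases le_or_gt x t₀ with h4 | h4
            · have : x ∈ A ∩ Ioc (u t₀) t₀ := ⟨hxA, h2, h4⟩
              rw [hWempty] at this; exact this
            · have hxV : x ∈ V := ⟨hxA, h4, le_trans h3 ht.2⟩
              have : v ≤ x := csInf_le hVbdd hxV
              linarith
          simp only [hg_def, this, dist_self]; exact hε
        · -- A accumulates at t₀ from the right; then t₀ ∈ A and u t₀ = t₀
          have ht₀A : t₀ ∈ A := heq ▸ hvA.1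
          have h1 : u t₀ = t₀ := le_antisymm hu₀.2.2 (hu_ub t₀ t₀ ht₀A ht₀.1 le_rfl)
          obtain ⟨s, hsV, hs⟩ := exists_lt_of_csInf_lt hV
            (show sInf V < t₀ + δ₁ by rw [← hv_def, ← heq]; linarith)
          refine ⟨s - t₀, by have := hsV.2.1; linarith, fun t ht htgt hclose => ?_⟩
          have h2 : t₀ ≤ u t := hu_ub t t₀ ht₀A ht₀.1 htgt.le
          have h3 : u t ≤ t := (hu_mem t ht.1).2.2
          have : dist (u t) (u t₀) < δ₁ := by
            rw [Real.dist_eq, abs_sub_lt_iff, h1]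
            constructor <;> linarith
          exact hδ₁ (hAsub (hu_mem t ht.1).1) this
    obtain ⟨δL, hδLpos, hLp⟩ := hL
    obtain ⟨δR, hδRpos, hRp⟩ := hR
    refine ⟨min δL δR, lt_min hδLpos hδRpos, fun t ht hdist => ?_⟩
    rw [Real.dist_eq, abs_sub_lt_iff] at hdist
    rcases lt_trichotomy t t₀ with h | h | h
    · exact hLp t ht h (lt_of_lt_of_le (by linarith [hdist.2]) (min_le_left _ _))
    · rw [h, dist_self]; exact hε
    · exact hRp t ht h (lt_of_lt_of_le (by linarith [hdist.1]) (min_le_right _ _))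
  have himg : g '' Icc c' d' = γ '' (A ∩ Icc c' d') := by
    ext x
    constructor
    · rintro ⟨t, ht, rfl⟩
      exact ⟨u t, ⟨(hu_mem t ht.1).1, (hu_mem t ht.1).2.1,
        le_trans (hu_mem t ht.1).2.2 ht.2⟩, rfl⟩
    · rintro ⟨s, ⟨hsA, hs1, hs2⟩, rfl⟩
      refine ⟨s, ⟨hs1, hs2⟩, ?_⟩
      have : u s = s := le_antisymm (hu_mem s hs1).2.2 (hu_ub s s hsA hs1 le_rfl)
      simp only [hg_def, this]
  rw [← himg]
  exact isPreconnected_Icc.image g hgcont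

/-- Lemma 6: every continuous mapping `γ : [a,b] → X` has a piecewise injective
modification: there is a compact set `A ⊆ [a,b]` containing `a` and `b` such that the
restriction of `γ` to `A` satisfies: (i) if `γ c = γ d` for `c, d ∈ A` with `c < d`,
then the open interval `(c, d)` does not meet `A`, and (ii) for every segment `[c,d]`
the set `γ([c,d] ∩ A)` is connected. -/
theorem exists_piecewise_injective_modification {X : Type*} [MetricSpace X]
    (a b : ℝ) (hab : a ≤ b) (γ : ℝ → X) (hγ : ContinuousOn γ (Set.Icc a b)) :
    ∃ A : Set ℝ, A ⊆ Set.Icc a b ∧ IsCompact A ∧ a ∈ A ∧ b ∈ A ∧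
      (∀ c ∈ A, ∀ d ∈ A, c < d → γ c = γ d → Set.Ioo c d ∩ A = ∅) ∧
      (∀ c d : ℝ, IsPreconnected (γ '' (Set.Icc c d ∩ A))) := by
  set S : Set (Set ℝ) := {A | A ⊆ Icc a b ∧ IsCompact A ∧ a ∈ A ∧ b ∈ A ∧ GapCondPI γ A}
    with hS_def
  have hIccS : Icc a b ∈ S := by
    refine ⟨Subset.rfl, isCompact_Icc, ⟨le_rfl, hab⟩, ⟨hab, le_rfl⟩, ?_⟩
    intro u hu v hv huv hemp
    exfalso
    have : (u + v) / 2 ∈ Ioo u v ∩ Icc a b :=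
      ⟨⟨by linarith, by linarith⟩, by constructor <;> [linarith [hu.1]; linarith [hv.2]]⟩
    rw [hemp] at this; exact this
  have hzorn : ∃ m, Minimal (· ∈ S) m := by
    apply zorn_superset
    intro c hcS hchain
    rcases c.eq_empty_or_nonempty with hc | ⟨A₀, hA₀⟩
    · exact ⟨Icc a b, hIccS, by simp [hc]⟩
    · refine ⟨⋂₀ c, ?_, fun s hs => sInter_subset_of_mem hs⟩
      have hsub : ⋂₀ c ⊆ A₀ := sInter_subset_of_mem hA₀
      have hclosed : IsClosed (⋂₀ c) :=
        isClosed_sInter fun A hA => ((hcS hA).2.1).isClosed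
      have hcomp : IsCompact (⋂₀ c) := ((hcS hA₀).2.1).of_isClosed_subset hclosed hsub
      refine ⟨hsub.trans (hcS hA₀).1, hcomp,
        fun A hA => (hcS hA).2.2.1, fun A hA => (hcS hA).2.2.2.1, ?_⟩
      intro u hu v hv huv hemp
      have huab : u ∈ Icc a b := (hcS hA₀).1 (hu A₀ hA₀)
      have hvab : v ∈ Icc a b := (hcS hA₀).1 (hv A₀ hA₀)
      apply eq_of_forall_dist_le
      intro ε hε
      obtain ⟨δ₁, hδ₁pos, hδ₁⟩ := Metric.continuousWithinAt_iff.1 (hγ u huab) (ε / 2)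
        (by positivity)
      obtain ⟨δ₂, hδ₂pos, hδ₂⟩ := Metric.continuousWithinAt_iff.1 (hγ v hvab) (ε / 2)
        (by positivity)
      set η := min (min δ₁ δ₂) ((v - u) / 2) / 2 with hη_def
      have hηpos : 0 < η := by
        apply div_pos (lt_min (lt_min hδ₁pos hδ₂pos) (by linarith)) two_pos
      have hη₁ : η < δ₁ := by
        have h1 : min (min δ₁ δ₂) ((v - u) / 2) ≤ δ₁ := le_trans (min_le_left _ _)
          (min_le_left _ _)
        linarith
      have hη₂ : η < δ₂ := by
        have h1 : min (min δ₁ δ₂) ((v - u) / 2) ≤ δ₂ := le_trans (min_le_left _ _)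
          (min_le_right _ _)
        linarith
      have hη₃ : 2 * η ≤ (v - u) / 2 := by
        have h1 : min (min δ₁ δ₂) ((v - u) / 2) ≤ (v - u) / 2 := min_le_right _ _
        linarith
      set K := Icc (u + η) (v - η) with hK_def
      have hKsub : K ⊆ Ioo u v := fun x hx => ⟨by linarith [hx.1], by linarith [hx.2]⟩
      -- some element of the chain misses K
      have hexists : ∃ A ∈ c, A ∩ K = ∅ := by
        by_contra h
        push_neg at h
        have hne : ∀ A : c, ((A : Set ℝ) ∩ K).Nonempty := fun A => h A A.2
        have hdir : Directed (· ⊇ ·) fun A : c => (A : Set ℝ) ∩ K := by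
          intro A B
          rcases hchain.total A.2 B.2 with h1 | h1
          · exact ⟨A, Subset.rfl, inter_subset_inter_left _ h1⟩
          · exact ⟨B, inter_subset_inter_left _ h1, Subset.rfl⟩
        have : Nonempty c := ⟨⟨A₀, hA₀⟩⟩
        obtain ⟨x, hx⟩ := IsCompact.nonempty_iInter_of_directed_nonempty_isCompact_isClosed
          (fun A : c => (A : Set ℝ) ∩ K) hdir hne
          (fun A => ((hcS A.2).2.1).inter_right isClosed_Icc)
          (fun A => ((hcS A.2).2.1.isClosed).inter isClosed_Icc)
        simp only [mem_iInter] at hx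
        have hx1 : x ∈ ⋂₀ c := fun A hA => (hx ⟨A, hA⟩).1
        have hx2 : x ∈ K := (hx ⟨A₀, hA₀⟩).2
        have : x ∈ Ioo u v ∩ ⋂₀ c := ⟨hKsub hx2, hx1⟩
        rw [hemp] at this; exact this
      obtain ⟨A, hAc, hAK⟩ := hexists
      have hAS := hcS hAc
      have huA : u ∈ A := hu A hAc
      have hvA : v ∈ A := hv A hAc
      set m := (u + v) / 2 with hm_def
      have hum : u ≤ m := by linarith
      have hmv : m ≤ v := by linarith
      set P := A ∩ Icc u m with hP_def
      set Q := A ∩ Icc m v with hQ_def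
      have hPc : IsCompact P := hAS.2.1.inter_right isClosed_Icc
      have hQc : IsCompact Q := hAS.2.1.inter_right isClosed_Icc
      have hPne : P.Nonempty := ⟨u, huA, le_rfl, hum⟩
      have hQne : Q.Nonempty := ⟨v, hvA, hmv, le_rfl⟩
      have hu' : sSup P ∈ P := hPc.sSup_mem hPne
      have hv' : sInf Q ∈ Q := hQc.sInf_mem hQne
      set u' := sSup P
      set v' := sInf Q
      have hnotK : ∀ x ∈ A, x ∉ K := by
        intro x hx hxK
        have : x ∈ A ∩ K := ⟨hx, hxK⟩
        rw [hAK] at this; exact this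
      have hu'lt : u' < u + η := by
        by_contra h
        push_neg at h
        exact hnotK u' hu'.1 ⟨h, by linarith [hu'.2.2]⟩
      have hv'gt : v - η < v' := by
        by_contra h
        push_neg at h
        exact hnotK v' hv'.1 ⟨by linarith [hv'.2.1], h⟩
      have hu'v' : u' < v' := by linarith
      have hgapA : Ioo u' v' ∩ A = ∅ := by
        ext x
        simp only [mem_inter_iff, mem_Ioo, mem_empty_iff_false, iff_false, not_and, and_imp]
        intro h1 h2 hxA
        rcases le_total x m with h3 | h3
        · have : x ≤ u' := le_csSup hPc.bddAbove ⟨hxA, by linarith [hu'.2.1], h3⟩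
          linarith
        · have : v' ≤ x := csInf_le hQc.bddBelow ⟨hxA, h3, by linarith [hv'.2.2]⟩
          linarith
      have hγ' : γ u' = γ v' := hAS.2.2.2.2 u' hu'.1 v' hv'.1 hu'v' hgapA
      have d1 : dist (γ u') (γ u) < ε / 2 := by
        apply hδ₁ (hAS.1 hu'.1)
        rw [Real.dist_eq, abs_sub_lt_iff]
        constructor <;> [linarith; linarith [hu'.2.1]]
      have d2 : dist (γ v') (γ v) < ε / 2 := by
        apply hδ₂ (hAS.1 hv'.1)
        rw [Real.dist_eq, abs_sub_lt_iff]
        constructor <;> [linarith [hv'.2.2]; linarith]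
      calc dist (γ u) (γ v) ≤ dist (γ u) (γ u') + dist (γ u') (γ v) := dist_triangle _ _ _
        _ = dist (γ u) (γ u') + dist (γ v') (γ v) := by rw [hγ']
        _ ≤ ε / 2 + ε / 2 := by
            rw [dist_comm (γ u)]
            exact add_le_add d1.le d2.le
        _ = ε := by ring
  obtain ⟨A, hAmin⟩ := hzorn
  have hAS : A ∈ S := hAmin.1
  refine ⟨A, hAS.1, hAS.2.1, hAS.2.2.1, hAS.2.2.2.1, ?_, ?_⟩
  · -- (i) : minimality gives loop erasure
    intro c hc d hd hcd hγcd
    by_contra hne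
    obtain ⟨t, htIoo, htA⟩ := nonempty_iff_ne_empty.2 hne
    set A' := A \ Ioo c d with hA'_def
    have hA'S : A' ∈ S := by
      refine ⟨(diff_subset).trans hAS.1, hAS.2.1.diff isOpen_Ioo, ?_, ?_, ?_⟩
      · exact ⟨hAS.2.2.1, fun h => absurd (hAS.1 hc).1 (not_le.2 h.1)⟩
      · exact ⟨hAS.2.2.2.1, fun h => absurd (hAS.1 hd).2 (not_le.2 h.2)⟩
      · intro u hu v hv huv hemp
        rcases (Ioo u v ∩ A).eq_empty_or_nonempty with hO | ⟨x, hxI, hxA⟩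
        · exact hAS.2.2.2.2 u hu.1 v hv.1 huv hO
        · have hx : x ∈ Ioo c d := by
            by_contra h
            have : x ∈ Ioo u v ∩ A' := ⟨hxI, hxA, h⟩
            rw [hemp] at this; exact this
          have huc : u ≤ c := by
            have h1 : ¬(c < u ∧ u < d) := hu.2
            by_contra h
            push_neg at h
            exact h1 ⟨h, by linarith [hxI.1, hx.2]⟩
          have hdv : d ≤ v := by
            have h1 : ¬(c < v ∧ v < d) := hv.2
            by_contra h
            push_neg at h
            exact h1 ⟨by linarith [hxI.2, hx.1], h⟩
          have huc' : u = c := by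
            rcases lt_or_eq_of_le huc with h | h
            · exfalso
              have : c ∈ Ioo u v ∩ A' :=
                ⟨⟨h, by linarith⟩, hc, fun hcc => absurd hcc.1 (lt_irrefl c)⟩
              rw [hemp] at this; exact this
            · exact h
          have hdv' : v = d := by
            rcases lt_or_eq_of_le hdv with h | h
            · exfalso
              have : d ∈ Ioo u v ∩ A' :=
                ⟨⟨by linarith, h⟩, hd, fun hdd => absurd hdd.2 (lt_irrefl d)⟩
              rw [hemp] at this; exact this
            · exact h.symm
          rw [huc', hdv']; exact hγcd
    have hsub : A ⊆ A' := hAmin.2 hA'S diff_subset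
    exact (hsub htA).2 htIoo
  · -- (ii) : connectedness of the image of interval sections
    intro c d
    rcases (Icc c d ∩ A).eq_empty_or_nonempty with hS' | hS'
    · rw [hS', image_empty]; exact isPreconnected_empty
    · have hScomp : IsCompact (Icc c d ∩ A) := hAS.2.1.inter_left isClosed_Icc
      have hc'mem : sInf (Icc c d ∩ A) ∈ Icc c d ∩ A := hScomp.sInf_mem hS'
      have hd'mem : sSup (Icc c d ∩ A) ∈ Icc c d ∩ A := hScomp.sSup_mem hS'
      set c' := sInf (Icc c d ∩ A)
      set d' := sSup (Icc c d ∩ A)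
      have hseq : Icc c d ∩ A = A ∩ Icc c' d' := by
        ext x
        constructor
        · intro hx
          exact ⟨hx.2, csInf_le hScomp.bddBelow hx, le_csSup hScomp.bddAbove hx⟩
        · rintro ⟨hxA, h1, h2⟩
          exact ⟨⟨le_trans hc'mem.1.1 h1, le_trans h2 hd'mem.1.2⟩, hxA⟩
      rw [hseq]
      exact gapCond_image_preconnected hγ hAS.1 hAS.2.1 hAS.2.2.2.2 hc'mem.2 hd'mem.2
        (le_csSup hScomp.bddAbove hc'mem)
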